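/- Let p be a prime and G be the ascending union of the iterated amalgamated products G_n = ℚ_p *_{ℤ_p} ℚ_p *_{pℤ_p} ⋯ *_{p^{n-1}ℤ_p} ℚ_p. Then G has no non-trivial abelian subnormal subgroup. -/

import Mathlib

universe u

/-- The subgroup `D` of `G` is the free product of its subgroups `A` and `C` with
amalgamated central subgroup `B`: the cocone of inclusions satisfies the universal
property of the pushout of the two inclusions `B → A` and `B → C`. -/
structure IsCentralAmalgamIn {G : Type u} [Group G] (A C B D : Subgroup G) : Prop where
  A_le : A ≤ D
  C_le : C ≤ D
  B_le_A : B ≤ A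
  B_le_C : B ≤ C
  central_A : ∀ b ∈ B, ∀ a ∈ A, b * a = a * b
  central_C : ∀ b ∈ B, ∀ c ∈ C, b * c = c * b
  isPushout : ∀ (K : Type u) [Group K] (f : ↥A →* K) (g : ↥C →* K),
      (∀ (b : G) (hb : b ∈ B), f ⟨b, B_le_A hb⟩ = g ⟨b, B_le_C hb⟩) →
      ∃! φ : ↥D →* K,
        φ.comp (Subgroup.inclusion A_le) = f ∧ φ.comp (Subgroup.inclusion C_le) = g

/-- The setting of the iterated central amalgamation
`G = ⋃_n (H₀ *_{B₀} H₁ *_{B₁} ⋯ *_{B_{n-1}} H_n)`: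
`B₀ ⊇ B₁ ⊇ ⋯` is a descending sequence of groups with `⋂_n B_n = 1`; for each `n`,
`B_n` is a central subgroup of both `H_n` and `H_{n+1}` with `B_n ≠ H_n` and
`B_n ≠ H_{n+1}`; `G₀ = H₀`, `G_{n+1} = G_n *_{B_n} H_{n+1}` (free product with central
amalgamation) and `G = ⋃_n G_n`.  All groups are realized as subgroups of `G`. -/
structure IteratedAmalgam (G : Type u) [Group G] where
  Gn : ℕ → Subgroup G
  Hn : ℕ → Subgroup G
  Bn : ℕ → Subgroup G
  B_antitone : ∀ n, Bn (n + 1) ≤ Bn n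
  B_iInf : ⨅ n, Bn n = ⊥
  B_le_H : ∀ n, Bn n ≤ Hn n
  B_le_H_succ : ∀ n, Bn n ≤ Hn (n + 1)
  B_central_H : ∀ n, ∀ b ∈ Bn n, ∀ h ∈ Hn n, b * h = h * b
  B_central_H_succ : ∀ n, ∀ b ∈ Bn n, ∀ h ∈ Hn (n + 1), b * h = h * b
  B_ne_H : ∀ n, Bn n ≠ Hn n
  B_ne_H_succ : ∀ n, Bn n ≠ Hn (n + 1)
  G_zero : Gn 0 = Hn 0
  amalgam : ∀ n, IsCentralAmalgamIn (Gn n) (Hn (n + 1)) (Bn n) (Gn (n + 1))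
  iSup_G : ⨆ n, Gn n = ⊤

/-- A subgroup `H` of `G` is *spread out* if `H ⊄ G_n` for every `n`. -/
def IteratedAmalgam.SpreadOut {G : Type u} [Group G] (S : IteratedAmalgam G)
    (H : Subgroup G) : Prop :=
  ∀ n : ℕ, ¬ H ≤ S.Gn n

/-- The additive subgroup `p^n ℤ_p` of `ℚ_p`. -/
def pPowZp (p : ℕ) [Fact p.Prime] (n : ℕ) : AddSubgroup ℚ_[p] where
  carrier := {x | ∃ y : ℤ_[p], (p : ℚ_[p]) ^ n * (y : ℚ_[p]) = x}
  add_mem' := by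
    rintro a b ⟨y, rfl⟩ ⟨z, rfl⟩
    exact ⟨y + z, by push_cast; ring⟩
  zero_mem' := ⟨0, by simp⟩
  neg_mem' := by
    rintro a ⟨y, rfl⟩
    exact ⟨-y, by push_cast; ring⟩

/-- The subgroup `p^n ℤ_p` of the additive group of `ℚ_p`, written multiplicatively. -/
noncomputable def pPowSubgroup (p : ℕ) [Fact p.Prime] (n : ℕ) : Subgroup (Multiplicative ℚ_[p]) :=
  AddSubgroup.toSubgroup (pPowZp p n)

/-- The iterated central amalgamation
`G = ⋃_n (ℚ_p *_{ℤ_p} ℚ_p *_{pℤ_p} ⋯ *_{p^{n-1}ℤ_p} ℚ_p)`: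
an iterated amalgam in which each `H_n` is a copy of the additive group `ℚ_p`, via an
isomorphism identifying `B_n ≤ H_n` with `p^n ℤ_p` and `B_n ≤ H_{n+1}` with
`p^n ℤ_p`. -/
structure PadicIteratedAmalgam (p : ℕ) [Fact p.Prime] (G : Type u) [Group G]
    extends IteratedAmalgam G where
  κ : ∀ n, ↥(Hn n) ≃* Multiplicative ℚ_[p]
  κ_B : ∀ (n : ℕ) (x : G) (hx : x ∈ Hn n),
    x ∈ Bn n ↔ κ n ⟨x, hx⟩ ∈ pPowSubgroup p n
  κ_B_succ : ∀ (n : ℕ) (x : G) (hx : x ∈ Hn (n + 1)),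
    x ∈ Bn n ↔ κ (n + 1) ⟨x, hx⟩ ∈ pPowSubgroup p n

/-- `S` is a subnormal subgroup of `H`: there is a finite chain
`S = c 0 ⊴ c 1 ⊴ ⋯ ⊴ c m = H` of successive normal subgroups. -/
def Subnormal {G : Type u} [Group G] (S H : Subgroup G) : Prop :=
  ∃ (m : ℕ) (c : ℕ → Subgroup G), c 0 = S ∧ c m = H ∧
    ∀ i < m, c i ≤ c (i + 1) ∧ ∀ g ∈ c (i + 1), ∀ x ∈ c i, g * x * g⁻¹ ∈ c i

/-! Suppose `1 ≠ t ∈ T`. Then `t ∈ G_N \ B_N` for some `N`; pick `y ∈ H_{N+1} \ B_N`. If `T` is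
subnormal of depth `m`, the iterated commutator `⁅⋯⁅⁅y, t⁆, t⁆, ⋯, t⁆` with `m` factors `t`
lies in `T`, so the one with `m + 1` factors is trivial because `T` is abelian. But since `B_N`
is central, `G_{N+1} = G_N *_{B_N} H_{N+1}` maps to the free product
`(G_N ⧸ B_N) ∗ (H_{N+1} ⧸ B_N)`, where these commutators are nonempty reduced words. -/

open Monoid
open scoped commutatorElement

theorem Monoid.CoprodI.NeWord.prod_ne_one {ι : Type*} {M : ι → Type*} [∀ i, Monoid (M i)]
    {i j : ι} (w : NeWord M i j) : w.prod ≠ 1 := by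
  classical
  intro h
  have : w.toWord = .empty := Word.equiv.symm.injective (h.trans Word.prod_empty.symm)
  exact w.toList_ne_nil (congrArg Word.toList this)

theorem MonoidHom.map_iterate_commutatorElement {G H : Type*} [Group G] [Group H] (f : G →* H)
    (g x : G) (k : ℕ) : f ((⁅·, g⁆)^[k] x) = (⁅·, f g⁆)^[k] (f x) :=
  Function.Semiconj.iterate_right (fun x => map_commutatorElement f x g) k x

theorem commutatorElement_mul_inv_left_self {G : Type*} [Group G] (x g : G) :
    ⁅x * g⁻¹, g⁆ = ⁅x, g⁆ := by
  simp only [commutatorElement_def]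
  group

namespace Monoid.CoprodI

variable {ι : Type*} {M : ι → Type*} [∀ i, Group (M i)]

theorem exists_neWord_commutatorElement_prod_of {i j : ι} (hij : i ≠ j) {a : M i} (ha : a ≠ 1)
    (w : NeWord M j j) : ∃ w' : NeWord M j j, ⁅w.prod, of a⁆ = w'.prod * (of a)⁻¹ :=
  ⟨((w.append hij.symm (NeWord.singleton a ha)).append hij w.inv), by
    simp only [NeWord.append_prod, NeWord.prod_singleton, NeWord.inv_prod, commutatorElement_def]⟩

theorem iterate_commutatorElement_of_ne_one {i j : ι} (hij : i ≠ j) {a : M i} (ha : a ≠ 1)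
    {y : M j} (hy : y ≠ 1) (k : ℕ) : (⁅·, of a⁆)^[k] (of y) ≠ 1 := by
  have hword : ∀ k, ∃ w : NeWord M j j, (⁅·, of a⁆)^[k + 1] (of y) = w.prod * (of a)⁻¹ := by
    intro k
    induction k with
    | zero => simpa using exists_neWord_commutatorElement_prod_of hij ha (.singleton y hy)
    | succ k ih =>
      obtain ⟨w, hw⟩ := ih
      rw [Function.iterate_succ_apply', hw, commutatorElement_mul_inv_left_self]
      exact exists_neWord_commutatorElement_prod_of hij ha w
  cases k with
  | zero => exact (map_ne_one_iff _ (of_injective j)).mpr hy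
  | succ k =>
    obtain ⟨w, hw⟩ := hword k
    rw [hw, ← map_inv, ← NeWord.prod_singleton a⁻¹ (inv_ne_one.mpr ha),
      ← NeWord.append_prod (hne := hij.symm)]
    exact NeWord.prod_ne_one _

end Monoid.CoprodI

abbrev pairFamily (X Y : Type u) : Bool → Type u
  | true => X
  | false => Y

instance pairFamily.instGroup (X Y : Type u) [Group X] [Group Y] : ∀ b, Group (pairFamily X Y b)
  | true => inferInstanceAs (Group X)
  | false => inferInstanceAs (Group Y)

theorem Subgroup.normal_subgroupOf_of_commute {G : Type*} [Group G] {B A : Subgroup G}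
    (h : ∀ b ∈ B, ∀ a ∈ A, b * a = a * b) : (B.subgroupOf A).Normal :=
  ⟨fun x hx g => by
    rw [Subgroup.mem_subgroupOf] at hx ⊢
    simpa [← h _ hx _ g.2] using hx⟩

theorem IsCentralAmalgamIn.iterate_commutatorElement_ne_one {G : Type u} [Group G]
    {A C B D : Subgroup G} (h : IsCentralAmalgamIn A C B D) {t y : G} (ht : t ∈ A)
    (htB : t ∉ B) (hy : y ∈ C) (hyB : y ∉ B) (k : ℕ) : (⁅·, t⁆)^[k] y ≠ 1 := by
  have := Subgroup.normal_subgroupOf_of_commute h.central_A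
  have := Subgroup.normal_subgroupOf_of_commute h.central_C
  let M := pairFamily (A ⧸ B.subgroupOf A) (C ⧸ B.subgroupOf C)
  let f : A →* CoprodI M := (CoprodI.of (i := true)).comp (QuotientGroup.mk' _)
  let g : C →* CoprodI M := (CoprodI.of (i := false)).comp (QuotientGroup.mk' _)
  obtain ⟨φ, ⟨hφA, hφC⟩, -⟩ := h.isPushout _ f g fun b hb => by
    have hA : QuotientGroup.mk' (B.subgroupOf A) ⟨b, h.B_le_A hb⟩ = 1 :=
      (QuotientGroup.eq_one_iff _).mpr hb
    have hC : QuotientGroup.mk' (B.subgroupOf C) ⟨b, h.B_le_C hb⟩ = 1 :=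
      (QuotientGroup.eq_one_iff _).mpr hb
    change CoprodI.of _ = CoprodI.of _
    rw [hA, hC, map_one, map_one]
  have hφt : φ ⟨t, h.A_le ht⟩ = f ⟨t, ht⟩ := DFunLike.congr_fun hφA ⟨t, ht⟩
  have hφy : φ ⟨y, h.C_le hy⟩ = g ⟨y, hy⟩ := DFunLike.congr_fun hφC ⟨y, hy⟩
  intro hk
  have hkD : (⁅·, (⟨t, h.A_le ht⟩ : D)⁆)^[k] ⟨y, h.C_le hy⟩ = 1 :=
    D.subtype_injective (by rw [D.subtype.map_iterate_commutatorElement, map_one]; exact hk)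
  refine CoprodI.iterate_commutatorElement_of_ne_one (M := M) (i := true) (j := false) (by decide)
    (a := QuotientGroup.mk' _ (⟨t, ht⟩ : A)) (y := QuotientGroup.mk' _ (⟨y, hy⟩ : C)) ?_ ?_ k ?_
  · simpa [M, Subgroup.mem_subgroupOf] using htB
  · simpa [M, Subgroup.mem_subgroupOf] using hyB
  · change (⁅·, f ⟨t, ht⟩⁆)^[k] (g ⟨y, hy⟩) = 1
    rw [← hφt, ← hφy, ← φ.map_iterate_commutatorElement, hkD, map_one]

theorem Subnormal.exists_iterate_commutatorElement_mem {G : Type u} [Group G] {T H : Subgroup G}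
    (hT : Subnormal T H) {t : G} (ht : t ∈ T) : ∃ m, ∀ x ∈ H, (⁅·, t⁆)^[m] x ∈ T := by
  obtain ⟨m, c, rfl, rfl, hc⟩ := hT
  have ht_mem : ∀ i ≤ m, t ∈ c i := by
    intro i hi
    induction i with
    | zero => exact ht
    | succ i ih => exact (hc i hi).1 (ih (by omega))
  have iterate_mem : ∀ i ≤ m, ∀ x ∈ c i, (⁅·, t⁆)^[i] x ∈ c 0 := by
    intro i hi
    induction i with
    | zero => exact fun x hx => hx
    | succ i ih =>
      intro x hx
      rw [Function.iterate_succ_apply]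
      have hti := ht_mem i (by omega)
      exact ih (by omega) _
        (mul_mem ((hc i (by omega)).2 x hx t hti) (inv_mem hti))
  exact ⟨m, iterate_mem m le_rfl⟩

namespace IteratedAmalgam

variable {G : Type u} [Group G] (S : IteratedAmalgam G)

theorem Gn_monotone : Monotone S.Gn :=
  monotone_nat_of_le_succ fun n => (S.amalgam n).A_le

theorem Bn_antitone : Antitone S.Bn :=
  antitone_nat_of_succ_le S.B_antitone

theorem exists_mem_Gn_not_mem_Bn {t : G} (ht : t ≠ 1) : ∃ N, t ∈ S.Gn N ∧ t ∉ S.Bn N := by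
  have htop : t ∈ ⨆ n, S.Gn n := S.iSup_G ▸ Subgroup.mem_top t
  obtain ⟨n, htn⟩ := (Subgroup.mem_iSup_of_directed S.Gn_monotone.directed_le).mp htop
  have hnot : t ∉ ⨅ k, S.Bn k := by rwa [S.B_iInf, Subgroup.mem_bot]
  obtain ⟨k, htk⟩ := not_forall.mp (mt Subgroup.mem_iInf.mpr hnot)
  exact ⟨max n k, S.Gn_monotone (le_max_left n k) htn,
    fun h => htk (S.Bn_antitone (le_max_right n k) h)⟩

theorem exists_mem_Hn_succ_not_mem_Bn (N : ℕ) : ∃ y ∈ S.Hn (N + 1), y ∉ S.Bn N :=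
  SetLike.exists_of_lt ((S.B_le_H_succ N).lt_of_ne (S.B_ne_H_succ N))

end IteratedAmalgam

/-- `G = ⋃_n (ℚ_p *_{ℤ_p} ℚ_p *_{pℤ_p} ⋯ *_{p^{n-1}ℤ_p} ℚ_p)` has no non-trivial
abelian subnormal subgroup. -/
theorem padicIteratedAmalgam_no_abelian_subnormal (p : ℕ) [Fact p.Prime]
    {G : Type u} [Group G] (S : PadicIteratedAmalgam p G)
    (T : Subgroup G) (hT : Subnormal T ⊤)
    (habel : ∀ a ∈ T, ∀ b ∈ T, a * b = b * a) :
    T = ⊥ := by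
  refine (Subgroup.eq_bot_iff_forall T).mpr fun t htT => by_contra fun ht => ?_
  obtain ⟨m, hm⟩ := hT.exists_iterate_commutatorElement_mem htT
  obtain ⟨N, htG, htB⟩ := S.exists_mem_Gn_not_mem_Bn ht
  obtain ⟨y, hyH, hyB⟩ := S.exists_mem_Hn_succ_not_mem_Bn N
  apply (S.amalgam N).iterate_commutatorElement_ne_one htG htB hyH hyB (m + 1)
  rw [Function.iterate_succ_apply', commutatorElement_eq_one_iff_mul_comm]
  exact habel _ (hm y (Subgroup.mem_top y)) t htT
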